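/- arXiv:2503.05941 — 2 statements merged into one kernel-verified Lean document; each statement's English description precedes it below -/
import Mathlib

section
/- (Finite termination of the conjugate directions method, Theorem 1.) Let Ā be a symmetric positive definite n×n real matrix, b ∈ ℝⁿ, and let p_0, p_1, …, p_{n−1} ∈ ℝⁿ be nonzero vectors conjugate with respect to Ā. Starting from an arbitrary x_0 ∈ ℝⁿ, define iterates by x_{k+1} = x_k + α_k p_k where α_k = −(Ā x_k − b)ᵀ p_k / (p_kᵀ Ā p_k). Then x_n = Ā⁻¹ b; that is, the sequence reaches the unique solution x* of Ā x = b in at most n steps. -/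
/-!
Write `r_k = Ā x_k - b` for the residual. Since `r_{k+1} = r_k + α_k Ā p_k`, the step size `α_k`
is exactly the one making `r_{k+1}` orthogonal to `p_k`, while conjugacy keeps `r_{k+1}`
orthogonal to the earlier `p_j`. Hence `r_n` is orthogonal to `p_0, …, p_{n-1}`. These are
`Ā`-orthogonal with `p_kᵀ Ā p_k > 0`, hence linearly independent, hence a basis of `ℝⁿ`;
so `r_n = 0`, i.e. `Ā x_n = b`.
-/

open Matrix

section ConjugateDirections

variable {m K : Type*} [Fintype m] [Field K]

theorem mulVec_add_smul_sub (A : Matrix m m K) (b x p : m → K) (α : K) :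
    A *ᵥ (x + α • p) - b = (A *ᵥ x - b) + α • A *ᵥ p := by
  rw [mulVec_add, mulVec_smul]; abel

def conjugateStepSize (A : Matrix m m K) (b x p : m → K) : K :=
  -((A *ᵥ x - b) ⬝ᵥ p / (p ⬝ᵥ A *ᵥ p))

theorem dotProduct_residual_add_conjugateStepSize_smul (A : Matrix m m K) (b x p : m → K)
    (hp : p ⬝ᵥ A *ᵥ p ≠ 0) :
    p ⬝ᵥ (A *ᵥ (x + conjugateStepSize A b x p • p) - b) = 0 := by
  rw [mulVec_add_smul_sub, dotProduct_add, dotProduct_smul, smul_eq_mul, conjugateStepSize,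
    dotProduct_comm (A *ᵥ x - b)]
  field_simp
  ring

theorem conjugateDirections_dotProduct_residual_eq_zero {N : ℕ} (A : Matrix m m K) (b : m → K)
    (p x : ℕ → m → K) (hconj : ∀ i < N, ∀ j < N, i ≠ j → p i ⬝ᵥ A *ᵥ p j = 0)
    (hself : ∀ k < N, p k ⬝ᵥ A *ᵥ p k ≠ 0)
    (hx : ∀ k < N, x (k + 1) = x k + conjugateStepSize A b (x k) (p k) • p k) :
    ∀ k ≤ N, ∀ j < k, p j ⬝ᵥ (A *ᵥ x k - b) = 0 := by
  intro k
  induction k with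
  | zero => intro _ j hj; omega
  | succ k ih =>
    intro hk j hj
    rw [hx k (by omega)]
    rcases Nat.lt_succ_iff_lt_or_eq.mp hj with hjk | rfl
    · rw [mulVec_add_smul_sub, dotProduct_add, dotProduct_smul, ih (by omega) j hjk,
        hconj j (by omega) k (by omega) hjk.ne, smul_zero, add_zero]
    · exact dotProduct_residual_add_conjugateStepSize_smul A b (x j) (p j) (hself j (by omega))

theorem linearIndependent_of_conjugate {ι : Type*} (A : Matrix m m K) {v : ι → m → K}
    (hconj : Pairwise fun i j => v i ⬝ᵥ A *ᵥ v j = 0) (hself : ∀ i, v i ⬝ᵥ A *ᵥ v i ≠ 0) :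
    LinearIndependent K v := by
  classical
  refine LinearMap.BilinForm.linearIndependent_of_iIsOrtho (B := A.toBilin') ?_ ?_
  · intro i j hij
    exact (toBilin'_apply' A _ _).trans (hconj hij)
  · intro i
    exact (toBilin'_apply' A _ _).trans_ne (hself i)

theorem eq_zero_of_dotProduct_eq_zero_of_span_eq_top {ι : Type*} {v : ι → m → K}
    (hv : Submodule.span K (Set.range v) = ⊤) {w : m → K} (h : ∀ i, v i ⬝ᵥ w = 0) : w = 0 := by
  refine dotProduct_eq_zero w fun u => ?_
  have hu : u ∈ Submodule.span K (Set.range v) := hv ▸ Submodule.mem_top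
  induction hu using Submodule.span_induction with
  | mem _ hmem =>
    obtain ⟨i, rfl⟩ := hmem
    rw [dotProduct_comm, h i]
  | zero => exact dotProduct_zero w
  | add _ _ _ _ h₁ h₂ => rw [dotProduct_add, h₁, h₂, add_zero]
  | smul a _ _ h₁ => rw [dotProduct_smul, h₁, smul_zero]

end ConjugateDirections

/-- Finite termination of the conjugate directions method:
with step sizes `α_k = −(Ā x_k − b)ᵀ p_k / (p_kᵀ Ā p_k)` along nonzero conjugate
directions `p_0, …, p_{n−1}`, from any `x_0` we have `x_n = Ā⁻¹ b`. -/
theorem stmt7 {n : ℕ} (Abar : Matrix (Fin n) (Fin n) ℝ) (hA : Abar.PosDef)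
    (b : Fin n → ℝ) (p : ℕ → (Fin n → ℝ)) (hp : ∀ k < n, p k ≠ 0)
    (hconj : ∀ i < n, ∀ j < n, i ≠ j → p i ⬝ᵥ Abar.mulVec (p j) = 0)
    (x : ℕ → (Fin n → ℝ))
    (hx : ∀ k < n, x (k + 1) = x k +
      (-(((Abar.mulVec (x k) - b) ⬝ᵥ p k) / (p k ⬝ᵥ Abar.mulVec (p k)))) • p k) :
    x n = Abar⁻¹.mulVec b := by
  have hself : ∀ k < n, p k ⬝ᵥ Abar *ᵥ p k ≠ 0 := fun k hk =>
    (by simpa using hA.dotProduct_mulVec_pos (hp k hk) : 0 < p k ⬝ᵥ Abar *ᵥ p k).ne'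
  have horth := conjugateDirections_dotProduct_residual_eq_zero Abar b p x hconj hself hx n le_rfl
  have hli : LinearIndependent ℝ fun i : Fin n => p i :=
    linearIndependent_of_conjugate Abar
      (fun i j hij => hconj i i.isLt j j.isLt (Fin.val_ne_of_ne hij)) fun i => hself i i.isLt
  have hres : Abar *ᵥ x n - b = 0 :=
    eq_zero_of_dotProduct_eq_zero_of_span_eq_top
      (hli.span_eq_top_of_card_eq_finrank' (by simp)) fun i => horth i i.isLt
  have := hA.isUnit.invertible
  exact (inv_mulVec_eq_vec (sub_eq_zero.mp hres).symm).symm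
end

section
/- (Correctness of the conjugate gradient direction update.) Let Ā be a symmetric positive definite n×n real matrix and b ∈ ℝⁿ. Consider the conjugate gradient iteration: r_0 = Ā x_0 − b, p_0 = −r_0, and for k ≥ 0 with r_k ≠ 0, α_k = (r_kᵀ r_k)/(p_kᵀ Ā p_k), x_{k+1} = x_k + α_k p_k, r_{k+1} = r_k + α_k Ā p_k, β_{k+1} = (r_{k+1}ᵀ r_{k+1})/(r_kᵀ r_k), p_{k+1} = −r_{k+1} + β_{k+1} p_k. Then for every k before termination: (i) r_iᵀ r_j = 0 for all i ≠ j with i, j ≤ k, and (ii) p_iᵀ Ā p_j = 0 for all i ≠ j with i, j ≤ k; i.e., the generated residuals are mutually orthogonal and the generated directions are conjugate with respect to Ā. -/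
/-!
Induction on the number of steps, carrying along `p_k ⬝ r_k = -‖r_k‖²`, which is what makes
the step size `α_k` give `r_{k+1} ⊥ p_k`. Since each residual lies in the span of two
consecutive directions, `r_j = -p_j + β_j p_{j-1}`, conjugacy of the old directions makes
`r_{k+1}` orthogonal to all old residuals. Conversely `Ā p_j = (r_{j+1} - r_j) / α_j`, so
orthogonality of the residuals makes `p_{k+1}` conjugate to all `p_j` with `j < k`, and
`β_{k+1}` is chosen exactly so that it is also conjugate to `p_k`.
-/

open Matrix

namespace ConjugateGradient

variable {ι : Type*} [Fintype ι] {A : Matrix ι ι ℝ} {r p : ℕ → ι → ℝ}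

theorem dotProduct_mulVec_comm (hA : A.IsHermitian) (u v : ι → ℝ) :
    u ⬝ᵥ A *ᵥ v = v ⬝ᵥ A *ᵥ u := by
  have hAT : Aᵀ = A := by simpa [Matrix.IsHermitian] using hA
  rw [dotProduct_mulVec, ← mulVec_transpose, hAT, dotProduct_comm]

/-- The first `N` steps of conjugate gradient, without the iterates `x_k`, which the residual
recurrence does not involve. -/
structure IsRun (A : Matrix ι ι ℝ) (r p : ℕ → ι → ℝ) (N : ℕ) : Prop where
  direction_zero : p 0 = -r 0
  residual_succ : ∀ k < N, r (k + 1) = r k + (r k ⬝ᵥ r k / (p k ⬝ᵥ A *ᵥ p k)) • A *ᵥ p k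
  direction_succ : ∀ k < N,
    p (k + 1) = -r (k + 1) + (r (k + 1) ⬝ᵥ r (k + 1) / (r k ⬝ᵥ r k)) • p k
  residual_ne_zero : ∀ k < N, r k ≠ 0

theorem IsRun.mono {N M : ℕ} (h : IsRun A r p N) (hMN : M ≤ N) : IsRun A r p M where
  direction_zero := h.direction_zero
  residual_succ k hk := h.residual_succ k (by omega)
  direction_succ k hk := h.direction_succ k (by omega)
  residual_ne_zero k hk := h.residual_ne_zero k (by omega)

theorem residual_dotProduct_eq_neg {β : ℕ → ℝ} {j : ℕ} (hp0 : p 0 = -r 0)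
    (hp : ∀ k < j, p (k + 1) = -r (k + 1) + β k • p k) {v : ι → ℝ}
    (hv : ∀ i < j, p i ⬝ᵥ v = 0) : r j ⬝ᵥ v = -(p j ⬝ᵥ v) := by
  cases j with
  | zero => rw [hp0, neg_dotProduct, neg_neg]
  | succ m =>
    have hr : r (m + 1) = -p (m + 1) + β m • p m := by rw [hp m m.lt_succ_self]; abel
    rw [hr, add_dotProduct, smul_dotProduct, hv m m.lt_succ_self, neg_dotProduct,
      smul_zero, add_zero]

def Invariant (A : Matrix ι ι ℝ) (r p : ℕ → ι → ℝ) (N : ℕ) : Prop :=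
  ∀ i ≤ N, p i ⬝ᵥ r i = -(r i ⬝ᵥ r i) ∧ ∀ j < i, r i ⬝ᵥ r j = 0 ∧ p i ⬝ᵥ A *ᵥ p j = 0

theorem Invariant.residual_dotProduct_eq_zero {N i j : ℕ} (hinv : Invariant A r p N)
    (hi : i ≤ N) (hj : j ≤ N) (hij : i ≠ j) : r i ⬝ᵥ r j = 0 := by
  rcases hij.lt_or_gt with h | h
  · rw [dotProduct_comm]; exact ((hinv j hj).2 i h).1
  · exact ((hinv i hi).2 j h).1

theorem Invariant.direction_dotProduct_mulVec_eq_zero (hA : A.IsHermitian) {N i j : ℕ}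
    (hinv : Invariant A r p N) (hi : i ≤ N) (hj : j ≤ N) (hij : i ≠ j) :
    p i ⬝ᵥ A *ᵥ p j = 0 := by
  rcases hij.lt_or_gt with h | h
  · rw [dotProduct_mulVec_comm hA]; exact ((hinv j hj).2 i h).2
  · exact ((hinv i hi).2 j h).2

theorem invariant_zero (hp0 : p 0 = -r 0) : Invariant A r p 0 := by
  intro i hi
  obtain rfl : i = 0 := by omega
  exact ⟨by rw [hp0, neg_dotProduct], fun j hj => absurd hj (Nat.not_lt_zero j)⟩

theorem Invariant.direction_curvature_pos (hA : A.PosDef) {N j : ℕ} (hinv : Invariant A r p N)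
    (hj : j ≤ N) (hrj : r j ≠ 0) : 0 < p j ⬝ᵥ A *ᵥ p j := by
  have hpj : p j ≠ 0 := by
    intro h0
    have := (hinv j hj).1
    rw [h0, zero_dotProduct, zero_eq_neg, dotProduct_self_eq_zero] at this
    exact hrj this
  simpa using hA.dotProduct_mulVec_pos hpj

theorem residual_succ_dotProduct_eq_zero (hA : A.IsHermitian) {K j : ℕ}
    (h : IsRun A r p (K + 1)) (hinv : Invariant A r p K) (hK : p K ⬝ᵥ A *ᵥ p K ≠ 0)
    (hj : j ≤ K) : r (K + 1) ⬝ᵥ r j = 0 := by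
  have hrj : r j ⬝ᵥ A *ᵥ p K = -(p j ⬝ᵥ A *ᵥ p K) :=
    residual_dotProduct_eq_neg h.direction_zero (fun k hk => h.direction_succ k (by omega))
      (fun i hi => hinv.direction_dotProduct_mulVec_eq_zero hA (by omega) le_rfl (by omega))
  rw [h.residual_succ K K.lt_succ_self, add_dotProduct, smul_dotProduct, smul_eq_mul,
    dotProduct_comm (A *ᵥ p K), hrj]
  rcases hj.lt_or_eq with hjK | rfl
  · rw [hinv.residual_dotProduct_eq_zero le_rfl hjK.le hjK.ne',
      hinv.direction_dotProduct_mulVec_eq_zero hA hjK.le le_rfl hjK.ne]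
    ring
  · field_simp
    ring

theorem direction_succ_dotProduct_residual_succ {K : ℕ} (h : IsRun A r p (K + 1))
    (hinv : Invariant A r p K) (hK : p K ⬝ᵥ A *ᵥ p K ≠ 0) :
    p (K + 1) ⬝ᵥ r (K + 1) = -(r (K + 1) ⬝ᵥ r (K + 1)) := by
  have hpK : p K ⬝ᵥ r (K + 1) = 0 := by
    rw [h.residual_succ K K.lt_succ_self, dotProduct_add, dotProduct_smul, smul_eq_mul,
      (hinv K le_rfl).1]
    field_simp
    ring
  rw [h.direction_succ K K.lt_succ_self, add_dotProduct, neg_dotProduct, smul_dotProduct, hpK,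
    smul_zero, add_zero]

theorem direction_succ_dotProduct_mulVec_eq_zero (hA : A.PosDef) {K j : ℕ}
    (h : IsRun A r p (K + 1)) (hinv : Invariant A r p K)
    (hperp : ∀ i ≤ K, r (K + 1) ⬝ᵥ r i = 0) (hj : j ≤ K) :
    p (K + 1) ⬝ᵥ A *ᵥ p j = 0 := by
  have hrj : r j ⬝ᵥ r j ≠ 0 := by
    rw [Ne, dotProduct_self_eq_zero]; exact h.residual_ne_zero j (by omega)
  have hcurv : p j ⬝ᵥ A *ᵥ p j ≠ 0 :=
    (hinv.direction_curvature_pos hA hj (h.residual_ne_zero j (by omega))).ne'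
  -- `α_j Ā p_j = r_{j+1} - r_j`
  have hAp : (r (K + 1) ⬝ᵥ A *ᵥ p j) * (r j ⬝ᵥ r j / (p j ⬝ᵥ A *ᵥ p j)) =
      r (K + 1) ⬝ᵥ r (j + 1) := by
    rw [h.residual_succ j (by omega), dotProduct_add, dotProduct_smul, smul_eq_mul, hperp j hj]
    ring
  rw [h.direction_succ K K.lt_succ_self, add_dotProduct, neg_dotProduct, smul_dotProduct,
    smul_eq_mul]
  rcases hj.lt_or_eq with hjK | rfl
  · rw [hperp (j + 1) hjK, mul_eq_zero, or_iff_left (div_ne_zero hrj hcurv)] at hAp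
    rw [hAp, hinv.direction_dotProduct_mulVec_eq_zero hA.isHermitian le_rfl hjK.le hjK.ne']
    ring
  · field_simp at hAp ⊢
    linarith

theorem invariant_succ (hA : A.PosDef) {K : ℕ} (h : IsRun A r p (K + 1))
    (hinv : Invariant A r p K) : Invariant A r p (K + 1) := by
  have hK : p K ⬝ᵥ A *ᵥ p K ≠ 0 :=
    (hinv.direction_curvature_pos hA le_rfl (h.residual_ne_zero K K.lt_succ_self)).ne'
  have hperp (j : ℕ) (hj : j ≤ K) : r (K + 1) ⬝ᵥ r j = 0 :=
    residual_succ_dotProduct_eq_zero hA.isHermitian h hinv hK hj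
  intro i hi
  rcases hi.lt_or_eq with hi | rfl
  · exact hinv i (by omega)
  · exact ⟨direction_succ_dotProduct_residual_succ h hinv hK, fun j hj =>
      ⟨hperp j (by omega), direction_succ_dotProduct_mulVec_eq_zero hA h hinv hperp (by omega)⟩⟩

theorem IsRun.invariant (hA : A.PosDef) {N : ℕ} (h : IsRun A r p N) : Invariant A r p N := by
  induction N with
  | zero => exact invariant_zero h.direction_zero
  | succ K ih => exact invariant_succ hA h (ih (h.mono K.le_succ))

end ConjugateGradient

theorem stmt10_general {n : ℕ} (Abar : Matrix (Fin n) (Fin n) ℝ) (hA : Abar.PosDef)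
    (x r p : ℕ → (Fin n → ℝ))
    (hp0 : p 0 = -r 0)
    (hstep : ∀ k : ℕ, r k ≠ 0 →
      x (k + 1) = x k + ((r k ⬝ᵥ r k) / (p k ⬝ᵥ Abar.mulVec (p k))) • p k ∧
      r (k + 1) = r k + ((r k ⬝ᵥ r k) / (p k ⬝ᵥ Abar.mulVec (p k))) • Abar.mulVec (p k) ∧
      p (k + 1) = -r (k + 1) + ((r (k + 1) ⬝ᵥ r (k + 1)) / (r k ⬝ᵥ r k)) • p k)
    (k : ℕ) (hterm : ∀ j ≤ k, r j ≠ 0) :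
    (∀ i ≤ k, ∀ j ≤ k, i ≠ j → r i ⬝ᵥ r j = 0) ∧
    (∀ i ≤ k, ∀ j ≤ k, i ≠ j → p i ⬝ᵥ Abar.mulVec (p j) = 0) := by
  have hrun : ConjugateGradient.IsRun Abar r p k :=
    { direction_zero := hp0
      residual_succ := fun j hj => (hstep j (hterm j hj.le)).2.1
      direction_succ := fun j hj => (hstep j (hterm j hj.le)).2.2
      residual_ne_zero := fun j hj => hterm j hj.le }
  have hinv := hrun.invariant hA
  exact ⟨fun i hi j hj => hinv.residual_dotProduct_eq_zero hi hj,
    fun i hi j hj => hinv.direction_dotProduct_mulVec_eq_zero hA.isHermitian hi hj⟩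

/-- Correctness of the conjugate gradient direction update:
before termination, the CG residuals are mutually orthogonal and the CG
directions are conjugate with respect to `Ā`. -/
theorem stmt10 {n : ℕ} (Abar : Matrix (Fin n) (Fin n) ℝ) (hA : Abar.PosDef)
    (b : Fin n → ℝ) (x r p : ℕ → (Fin n → ℝ))
    (hr0 : r 0 = Abar.mulVec (x 0) - b) (hp0 : p 0 = -r 0)
    (hstep : ∀ k : ℕ, r k ≠ 0 →
      x (k + 1) = x k + ((r k ⬝ᵥ r k) / (p k ⬝ᵥ Abar.mulVec (p k))) • p k ∧
      r (k + 1) = r k + ((r k ⬝ᵥ r k) / (p k ⬝ᵥ Abar.mulVec (p k))) • Abar.mulVec (p k) ∧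
      p (k + 1) = -r (k + 1) + ((r (k + 1) ⬝ᵥ r (k + 1)) / (r k ⬝ᵥ r k)) • p k)
    (k : ℕ) (hterm : ∀ j ≤ k, r j ≠ 0) :
    (∀ i ≤ k, ∀ j ≤ k, i ≠ j → r i ⬝ᵥ r j = 0) ∧
    (∀ i ≤ k, ∀ j ≤ k, i ≠ j → p i ⬝ᵥ Abar.mulVec (p j) = 0) :=
  stmt10_general Abar hA x r p hp0 hstep k hterm
end
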